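/- arXiv:0807.5028 — 5 statements merged into one kernel-verified Lean document; each statement's English description precedes it below -/
import Mathlib

section
/- For all integers k ≥ 2 and n ≥ 0, the number of abelian squares over a k-letter alphabet satisfies the recurrence f_k(n) = Σ_{0≤j≤n} C(n,j)^2 · f_{k-1}(j). -/
/-- `abelianSquares k n` is the number of abelian squares of length `2n` over a
`k`-letter alphabet: pairs `(x, x')` of words of length `n` over `Fin k` such that
for each letter `a`, the number of occurrences of `a` in `x` equals the number of
occurrences of `a` in `x'`. -/
def abelianSquares (k n : ℕ) : ℕ :=
  Fintype.card {p : (Fin n → Fin k) × (Fin n → Fin k) //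
    ∀ a : Fin k,
      (Finset.univ.filter fun i => p.1 i = a).card =
      (Finset.univ.filter fun i => p.2 i = a).card}

/-! Treat the last letter as a blank. A word over `m + 1` letters is the same as the set `s` of
its non-blank positions together with the word over `m` letters read off `s` in increasing order.
Two words form an abelian square iff their non-blank sets have the same size `j` and the words
read off them form an abelian square over `m` letters; the two sets can be chosen in
`(n.choose j) ^ 2` ways. -/

namespace AbelianSquares

open Finset

def letterCount {ι α : Type*} [Fintype ι] [DecidableEq α] (x : ι → α) (a : α) : ℕ :=
  #{i | x i = a}

def prodProdSubtypeEquiv {α β : Type*} (P : β → β → Prop) :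
    {r : (α × β) × (α × β) // P r.1.2 r.2.2} ≃ (α × α) × {w : β × β // P w.1 w.2} where
  toFun r := ((r.1.1.1, r.1.2.1), ⟨(r.1.1.2, r.1.2.2), r.2⟩)
  invFun t := ⟨((t.1.1, t.2.1.1), (t.1.2, t.2.1.2)), t.2.2⟩

theorem abelianSquares_eq_card (k n : ℕ) :
    abelianSquares k n =
      Fintype.card {p : (Fin n → Fin k) × (Fin n → Fin k) // letterCount p.1 = letterCount p.2} :=
  Fintype.card_congr (Equiv.subtypeEquivRight fun _ => funext_iff.symm)

variable {n m j : ℕ}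

def nonLast (x : Fin n → Fin (m + 1)) : Finset (Fin n) := {i | x i ≠ Fin.last m}

theorem letterCount_last (x : Fin n → Fin (m + 1)) :
    letterCount x (Fin.last m) = n - #(nonLast x) := by
  have h := card_filter_add_card_filter_not (s := univ) fun i => x i = Fin.last m
  rw [card_univ, Fintype.card_fin] at h
  simp only [letterCount, nonLast, ne_eq]
  omega

theorem card_nonLast_le (x : Fin n → Fin (m + 1)) : #(nonLast x) ≤ n :=
  card_le_univ _ |>.trans_eq (Fintype.card_fin n)

theorem letterCount_eq_letterCount_iff {x y : Fin n → Fin (m + 1)} :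
    letterCount x = letterCount y ↔
      #(nonLast x) = #(nonLast y) ∧
        ∀ b : Fin m, letterCount x b.castSucc = letterCount y b.castSucc := by
  have hx := card_nonLast_le x
  have hy := card_nonLast_le y
  rw [funext_iff, Fin.forall_fin_succ', letterCount_last, letterCount_last, and_comm]
  constructor <;> rintro ⟨h, h'⟩ <;> exact ⟨by omega, h'⟩

def expand (s : {s : Finset (Fin n) // #s = j}) (w : Fin j → Fin m) : Fin n → Fin (m + 1) :=
  fun i => if h : i ∈ s.1 then (w ((s.1.orderIsoOfFin s.2).symm ⟨i, h⟩)).castSucc else Fin.last m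

def compress (x : {x : Fin n → Fin (m + 1) // #(nonLast x) = j}) : Fin j → Fin m :=
  fun r => (x.1 ((nonLast x.1).orderIsoOfFin x.2 r)).castPred
    (mem_filter.mp ((nonLast x.1).orderIsoOfFin x.2 r).2).2

theorem castSucc_compress (x : {x : Fin n → Fin (m + 1) // #(nonLast x) = j}) (r : Fin j) :
    (compress x r).castSucc = x.1 ((nonLast x.1).orderIsoOfFin x.2 r) :=
  Fin.castSucc_castPred _ _

section Expand

variable (s : {s : Finset (Fin n) // #s = j}) (w : Fin j → Fin m)

theorem expand_orderIsoOfFin (r : Fin j) :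
    expand s w (s.1.orderIsoOfFin s.2 r) = (w r).castSucc := by
  rw [expand, dif_pos (s.1.orderIsoOfFin s.2 r).2, Subtype.coe_eta, OrderIso.symm_apply_apply]

theorem nonLast_expand : nonLast (expand s w) = s := by
  ext i
  by_cases h : i ∈ s.1
  · simp [nonLast, expand, h, Fin.castSucc_ne_last]
  · simp [nonLast, expand, h]

theorem letterCount_expand_castSucc (b : Fin m) :
    letterCount (expand s w) b.castSucc = letterCount w b := by
  rw [letterCount, letterCount, ← card_map (s.1.orderEmbOfFin s.2).toEmbedding]
  congr 1
  ext i
  simp only [mem_filter, mem_univ, true_and, mem_map]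
  constructor
  · intro hi
    have hs : i ∈ s.1 := by
      by_contra hs
      simp only [expand, hs, dite_false] at hi
      exact (Fin.castSucc_lt_last b).ne' hi
    obtain ⟨r, rfl⟩ : ∃ r, (s.1.orderIsoOfFin s.2 r : Fin n) = i :=
      ⟨(s.1.orderIsoOfFin s.2).symm ⟨i, hs⟩, by simp⟩
    rw [expand_orderIsoOfFin] at hi
    exact ⟨r, Fin.castSucc_injective m hi, by simp⟩
  · rintro ⟨r, rfl, rfl⟩
    simpa using expand_orderIsoOfFin s w r

theorem compress_expand (h : #(nonLast (expand s w)) = j) : compress ⟨expand s w, h⟩ = w := by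
  have hiso : ∀ (t : Finset (Fin n)) (ht : #t = j), t = s.1 →
      ∀ r, (t.orderIsoOfFin ht r : Fin n) = s.1.orderIsoOfFin s.2 r := by
    rintro _ _ rfl _
    rfl
  funext r
  apply Fin.castSucc_injective
  rw [castSucc_compress, hiso _ h (nonLast_expand s w)]
  exact expand_orderIsoOfFin s w r

end Expand

theorem expand_compress (x : {x : Fin n → Fin (m + 1) // #(nonLast x) = j}) :
    expand ⟨nonLast x.1, x.2⟩ (compress x) = x.1 := by
  funext i
  by_cases hi : i ∈ nonLast x.1
  · obtain ⟨r, rfl⟩ : ∃ r, ((nonLast x.1).orderIsoOfFin x.2 r : Fin n) = i :=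
      ⟨((nonLast x.1).orderIsoOfFin x.2).symm ⟨i, hi⟩, by simp⟩
    rw [expand_orderIsoOfFin, castSucc_compress]
  · simp only [nonLast, mem_filter, mem_univ, true_and, not_not] at hi
    simp [expand, nonLast, hi]

def splitEquiv :
    {x : Fin n → Fin (m + 1) // #(nonLast x) = j} ≃
      {s : Finset (Fin n) // #s = j} × (Fin j → Fin m) where
  toFun x := (⟨nonLast x.1, x.2⟩, compress x)
  invFun p := ⟨expand p.1 p.2, by rw [nonLast_expand]; exact p.1.2⟩
  left_inv x := Subtype.ext (expand_compress x)
  right_inv p := Prod.ext (Subtype.ext (nonLast_expand p.1 p.2)) (compress_expand p.1 p.2 _)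

theorem letterCount_compress (x : {x : Fin n → Fin (m + 1) // #(nonLast x) = j}) (b : Fin m) :
    letterCount (compress x) b = letterCount x.1 b.castSucc := by
  rw [← letterCount_expand_castSucc ⟨nonLast x.1, x.2⟩, expand_compress]

def abelianFiberEquiv :
    {p : (Fin n → Fin (m + 1)) × (Fin n → Fin (m + 1)) //
        letterCount p.1 = letterCount p.2 ∧ #(nonLast p.1) = j} ≃
      {q : {x : Fin n → Fin (m + 1) // #(nonLast x) = j} ×
          {x : Fin n → Fin (m + 1) // #(nonLast x) = j} //
        ∀ b : Fin m, letterCount q.1.1 b.castSucc = letterCount q.2.1 b.castSucc} where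
  toFun p := ⟨(⟨p.1.1, p.2.2⟩, ⟨p.1.2, (letterCount_eq_letterCount_iff.mp p.2.1).1 ▸ p.2.2⟩),
    (letterCount_eq_letterCount_iff.mp p.2.1).2⟩
  invFun q := ⟨(q.1.1.1, q.1.2.1),
    letterCount_eq_letterCount_iff.mpr ⟨q.1.1.2.trans q.1.2.2.symm, q.2⟩, q.1.1.2⟩

theorem card_abelianFiber :
    Fintype.card {p : (Fin n → Fin (m + 1)) × (Fin n → Fin (m + 1)) //
        letterCount p.1 = letterCount p.2 ∧ #(nonLast p.1) = j} =
      n.choose j ^ 2 * abelianSquares m j := by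
  let e := abelianFiberEquiv.trans <|
    (((splitEquiv (n := n)).prodCongr splitEquiv).subtypeEquiv fun q => by
      simp only [splitEquiv, Equiv.prodCongr_apply, Equiv.coe_fn_mk, Prod.map_snd, Prod.map_fst,
        funext_iff, letterCount_compress]).trans
    (prodProdSubtypeEquiv fun w w' : Fin j → Fin m => letterCount w = letterCount w')
  rw [Fintype.card_congr e, Fintype.card_prod, Fintype.card_prod, Fintype.card_finset_len,
    Fintype.card_fin, abelianSquares_eq_card, sq]

end AbelianSquares

open Finset AbelianSquares in
theorem abelianSquares_recurrence (k : ℕ) (hk : 2 ≤ k) (n : ℕ) :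
    abelianSquares k n =
      ∑ j ∈ Finset.range (n + 1), (n.choose j) ^ 2 * abelianSquares (k - 1) j := by
  obtain ⟨m, rfl⟩ : ∃ m, k = m + 1 := ⟨k - 1, by omega⟩
  rw [abelianSquares_eq_card, Fintype.card_subtype, Nat.add_sub_cancel,
    card_eq_sum_card_fiberwise (f := fun p => #(nonLast p.1)) (t := range (n + 1))
      fun p _ => mem_range_succ_iff.mpr (card_nonLast_le p.1)]
  refine sum_congr rfl fun j _ => ?_
  rw [filter_filter, ← Fintype.card_subtype, card_abelianFiber]
end

section
/- For every integer n ≥ 0, the number of abelian squares of length 2n over a 3-letter alphabet equals f_3(n) = Σ_{0≤i≤n} C(n,i)^2 · C(2i, i). -/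
/-!
Over the alphabet `{0, 1, 2}` the counts of all three letters are determined by the number `i`
of nonzero letters and the number `b` of letters `1`, so `(x, x')` is an abelian square iff
`x` and `x'` have the same pair `(i, b)`. A word is determined by its support `S` (an `i`-set)
and the set `T ⊆ S` of its `1`s (a `b`-subset of `S`), so `C(n, i) C(i, b)` words have the pair
`(i, b)`. Squaring and summing over `b` with Vandermonde's `∑ C(i, b)² = C(2i, i)` gives the
formula.
-/

open Finset

theorem card_filter_apply_eq_apply_eq_sum_sq {ι M : Type*} [DecidableEq M] (f : ι → M)
    (s : Finset ι) (t : Finset M) (h : ∀ x ∈ s, f x ∈ t) :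
    #{p ∈ s ×ˢ s | f p.1 = f p.2} = ∑ b ∈ t, #{x ∈ s | f x = b} ^ 2 := by
  rw [card_eq_sum_card_fiberwise (f := fun p => f p.1) (t := t)
    (fun p hp => h _ (mem_product.1 (mem_filter.1 hp).1).1)]
  refine sum_congr rfl fun b _ => ?_
  rw [sq, ← card_product, filter_filter]
  congr 1
  ext ⟨x, y⟩
  simp only [mem_filter, mem_product]
  grind

section FinThree

variable {α : Type*} [Fintype α] [DecidableEq α]

theorem card_filter_ne_zero_fin_three (x : α → Fin 3) :
    #{j | x j ≠ 0} = #{j | x j = 1} + #{j | x j = 2} := by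
  rw [← card_union_of_disjoint (disjoint_filter.2 fun j _ h1 h2 => by simp [h1] at h2),
    ← filter_or]
  congr 1
  ext j
  simp only [mem_filter, mem_univ, true_and]
  generalize x j = v
  revert v; decide

theorem forall_card_filter_eq_iff_fin_three (x y : α → Fin 3) :
    (∀ a, #{j | x j = a} = #{j | y j = a}) ↔
      #{j | x j ≠ 0} = #{j | y j ≠ 0} ∧ #{j | x j = 1} = #{j | y j = 1} := by
  have hx := card_filter_ne_zero_fin_three x
  have hy := card_filter_ne_zero_fin_three y
  have hx0 : #{j | x j = 0} + #{j | x j ≠ 0} = #(univ : Finset α) :=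
    card_filter_add_card_filter_not _
  have hy0 : #{j | y j = 0} + #{j | y j ≠ 0} = #(univ : Finset α) :=
    card_filter_add_card_filter_not _
  constructor
  · intro h
    have := h 1; have := h 2
    omega
  · rintro ⟨h0, h1⟩ a
    match a with
    | 0 => omega
    | 1 => exact h1
    | 2 => omega

theorem card_fin_three_funs_with_counts (i b : ℕ) :
    #{x : α → Fin 3 | #{j | x j ≠ 0} = i ∧ #{j | x j = 1} = b} =
      (Fintype.card α).choose i * i.choose b := by
  have hpairs : #((powersetCard i (univ : Finset α)).sigma fun S => powersetCard b S) =
      (Fintype.card α).choose i * i.choose b := by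
    rw [card_sigma, sum_congr rfl fun S hS => card_powersetCard b S,
      sum_congr rfl fun S hS => by rw [(mem_powersetCard.1 hS).2], sum_const,
      card_powersetCard, card_univ, smul_eq_mul]
  have hword : ∀ S T : Finset α, T ⊆ S →
      ({j | (if j ∈ T then 1 else if j ∈ S then 2 else 0 : Fin 3) ≠ 0} : Finset α) = S ∧
      ({j | (if j ∈ T then 1 else if j ∈ S then 2 else 0 : Fin 3) = 1} : Finset α) = T := by
    intro S T hTS
    constructor <;> ext j <;> by_cases j ∈ T <;> grind
  rw [← hpairs]
  refine card_bij' (fun x _ => ⟨({j | x j ≠ 0} : Finset α), ({j | x j = 1} : Finset α)⟩)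
    (fun p _ => fun j => if j ∈ p.2 then 1 else if j ∈ p.1 then 2 else 0) ?_ ?_ ?_ ?_
  · intro x hx
    simp only [mem_filter, mem_univ, true_and] at hx
    simp only [mem_sigma, mem_powersetCard, subset_univ, true_and, hx, and_true]
    exact monotone_filter_right _ fun j _ (h : x j = 1) => by simp [h]
  · rintro ⟨S, T⟩ hST
    simp only [mem_sigma, mem_powersetCard, subset_univ, true_and] at hST
    obtain ⟨hS, hT⟩ := hword S T hST.2.1
    simp only [mem_filter, mem_univ, hS, hT, hST.1, hST.2.2, and_self]
  · intro x _
    funext j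
    simp only [mem_filter, mem_univ, true_and]
    generalize x j = v
    revert v; decide
  · rintro ⟨S, T⟩ hST
    simp only [mem_sigma, mem_powersetCard, subset_univ, true_and] at hST
    obtain ⟨hS, hT⟩ := hword S T hST.2.1
    simp only [hS, hT]

end FinThree

theorem sum_range_choose_sq_of_le {i m : ℕ} (h : i ≤ m) :
    ∑ b ∈ range (m + 1), i.choose b ^ 2 = (2 * i).choose i := by
  rw [← Nat.sum_range_choose_sq, eq_comm]
  refine sum_subset (range_subset_range.2 (by omega)) fun b _ hb => ?_
  rw [Nat.choose_eq_zero_of_lt (by simpa using hb), zero_pow two_ne_zero]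

theorem abelianSquares_three (n : ℕ) :
    abelianSquares 3 n =
      ∑ i ∈ Finset.range (n + 1), (n.choose i) ^ 2 * (2 * i).choose i := by
  let shape : (Fin n → Fin 3) → ℕ × ℕ := fun x => (#{j | x j ≠ 0}, #{j | x j = 1})
  have hshape : ∀ x ∈ univ, shape x ∈ range (n + 1) ×ˢ range (n + 1) := fun x _ => by
    simp only [shape, mem_product, mem_range, Nat.lt_succ_iff]
    exact ⟨(card_filter_le _ _).trans_eq (card_fin n), (card_filter_le _ _).trans_eq (card_fin n)⟩
  calc abelianSquares 3 n = #{p ∈ univ ×ˢ univ | shape p.1 = shape p.2} := by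
        rw [abelianSquares, Fintype.card_subtype, univ_product_univ]
        simp only [shape, Prod.mk.injEq, forall_card_filter_eq_iff_fin_three]
    _ = ∑ i ∈ range (n + 1), ∑ b ∈ range (n + 1), (n.choose i * i.choose b) ^ 2 := by
        rw [card_filter_apply_eq_apply_eq_sum_sq shape _ _ hshape, sum_product]
        simp only [shape, Prod.mk.injEq, card_fin_three_funs_with_counts, Fintype.card_fin]
    _ = _ := by
        refine sum_congr rfl fun i hi => ?_
        rw [← sum_range_choose_sq_of_le (Nat.lt_succ_iff.1 (mem_range.1 hi)), mul_sum]
        simp only [mul_pow]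
end

section
/- For all integers k₁, k₂ ≥ 1 and n ≥ 0, the numbers of abelian squares satisfy f_{k₁+k₂}(n) = Σ_{0≤i≤n} C(n,i)^2 · f_{k₁}(i) · f_{k₂}(n−i). -/
/-!
Split the alphabet `Fin (k₁ + k₂)` as `Fin k₁ ⊕ Fin k₂`. A pair of words over the sum alphabet
is the same as the sets `S`, `S'` of positions carrying a left letter, together with a pair of
words over `Fin k₁` indexed by `S`, `S'` and a pair over `Fin k₂` indexed by the complements;
the pair is abelian exactly when both restricted pairs are. An abelian pair forces `#S = #S'`,
so the `n.choose i ^ 2` pairs `(S, S')` with `#S = #S' = i` each contribute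
`abelianSquares k₁ i * abelianSquares k₂ (n - i)`.
-/

open Finset Function

section LetterCount

variable {α α' γ γ' β β' δ : Type*} [Fintype α] [Fintype α'] [Fintype γ] [Fintype γ']
  [DecidableEq β] [DecidableEq β'] [DecidableEq δ]

def letterCount (x : α → β) (b : β) : ℕ := #{i | x i = b}

def AbelianEquiv (x : α → β) (x' : α' → β) : Prop :=
  ∀ b, letterCount x b = letterCount x' b

instance (x : α → β) (x' : α' → β) [Fintype β] : Decidable (AbelianEquiv x x') :=
  inferInstanceAs (Decidable (∀ b, letterCount x b = letterCount x' b))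

abbrev AbelianPairs (α α' β : Type*) [Fintype α] [Fintype α'] [DecidableEq β] : Type _ :=
  {p : (α → β) × (α' → β) // AbelianEquiv p.1 p.2}

lemma letterCount_comp_equiv (e : γ ≃ α) (x : α → β) (b : β) :
    letterCount (x ∘ e) b = letterCount x b :=
  card_equiv e (by simp)

lemma letterCount_equiv_comp (g : β ≃ β') (x : α → β) (b : β) :
    letterCount (g ∘ x) (g b) = letterCount x b := by
  simp [letterCount]

lemma letterCount_of_forall_eq_comp {S : Finset α} {f : δ → β}
    (hf : Injective f) {x : α → β} {y : S → δ} (hxy : ∀ i : S, x i = f (y i))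
    (hS : ∀ i b, x i = f b → i ∈ S) (b : δ) :
    letterCount y b = letterCount x (f b) := by
  simp only [letterCount, ← Fintype.card_subtype]
  exact Fintype.card_congr <|
    (Equiv.subtypeEquivRight fun i => by rw [hxy, hf.eq_iff]).trans
      (Equiv.subtypeSubtypeEquivSubtype (hS _ b))

lemma sum_letterCount [Fintype β] (x : α → β) : ∑ b, letterCount x b = Fintype.card α := by
  rw [← card_univ, card_eq_sum_card_fiberwise fun i _ => mem_univ (x i)]
  rfl

lemma AbelianEquiv.card_eq [Fintype β] {x : α → β} {x' : α' → β} (h : AbelianEquiv x x') :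
    Fintype.card α = Fintype.card α' := by
  rw [← sum_letterCount x, ← sum_letterCount x']
  exact Fintype.sum_congr _ _ h

def abelianPairsCongr (g : β ≃ β') (e : α ≃ γ) (e' : α' ≃ γ') :
    AbelianPairs α α' β ≃ AbelianPairs γ γ' β' :=
  (Equiv.prodCongr (e.arrowCongr g) (e'.arrowCongr g)).subtypeEquiv fun p => by
    change AbelianEquiv p.1 p.2 ↔ AbelianEquiv (g ∘ p.1 ∘ e.symm) (g ∘ p.2 ∘ e'.symm)
    rw [AbelianEquiv, AbelianEquiv, ← g.forall_congr_right]
    simp only [letterCount_equiv_comp, letterCount_comp_equiv]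

lemma card_abelianPairs {k n : ℕ} [Fintype β] [DecidableEq α] [DecidableEq α']
    (hβ : Fintype.card β = k) (hα : Fintype.card α = n) (hα' : Fintype.card α' = n) :
    Fintype.card (AbelianPairs α α' β) = abelianSquares k n :=
  Fintype.card_congr <| abelianPairsCongr (Fintype.equivFinOfCardEq hβ)
    (Fintype.equivFinOfCardEq hα) (Fintype.equivFinOfCardEq hα')

lemma card_abelianPairs_eq_zero [Fintype β] [DecidableEq α] [DecidableEq α']
    (h : Fintype.card α ≠ Fintype.card α') :
    Fintype.card (AbelianPairs α α' β) = 0 :=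
  Fintype.card_eq_zero_iff.mpr ⟨fun p => h p.2.card_eq⟩

end LetterCount

section SumAlphabet

variable {α α' β₁ β₂ : Type*} [Fintype α] [Fintype α']

def leftPositions (x : α → β₁ ⊕ β₂) : Finset α := {i | (x i).isLeft}

lemma mem_leftPositions {x : α → β₁ ⊕ β₂} {i : α} : i ∈ leftPositions x ↔ (x i).isLeft := by
  simp [leftPositions]

lemma isLeft_iff_mem_of_leftPositions_eq {x : α → β₁ ⊕ β₂} {S : Finset α}
    (h : leftPositions x = S) (i : α) : (x i).isLeft ↔ i ∈ S := by
  rw [← h, mem_leftPositions]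

variable [DecidableEq α] [DecidableEq α']

def sumWordEquiv (S : Finset α) :
    {x : α → β₁ ⊕ β₂ // leftPositions x = S} ≃ (S → β₁) × (↥Sᶜ → β₂) where
  toFun x :=
    (fun i => (x.1 i).getLeft ((isLeft_iff_mem_of_leftPositions_eq x.2 i).2 i.2),
     fun i => (x.1 i).getRight <| Sum.not_isLeft.1 fun h =>
       mem_compl.1 i.2 ((isLeft_iff_mem_of_leftPositions_eq x.2 i).1 h))
  invFun yz :=
    ⟨fun i => if h : i ∈ S then .inl (yz.1 ⟨i, h⟩) else .inr (yz.2 ⟨i, mem_compl.2 h⟩), by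
      ext i; by_cases h : i ∈ S <;> simp [mem_leftPositions, h]⟩
  left_inv x := by
    ext i : 2
    by_cases h : i ∈ S <;> simp [h]
  right_inv yz := by
    ext i
    · simp
    · simp [mem_compl.1 i.2]

variable [DecidableEq β₁] [DecidableEq β₂] {S : Finset α}

lemma letterCount_sumWordEquiv_fst (x : {x : α → β₁ ⊕ β₂ // leftPositions x = S}) (b : β₁) :
    letterCount (sumWordEquiv S x).1 b = letterCount x.1 (.inl b) :=
  letterCount_of_forall_eq_comp Sum.inl_injective (fun _ => (Sum.inl_getLeft _ _).symm)
    (fun i b h => (isLeft_iff_mem_of_leftPositions_eq x.2 i).1 (by simp [h])) b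

lemma letterCount_sumWordEquiv_snd (x : {x : α → β₁ ⊕ β₂ // leftPositions x = S}) (b : β₂) :
    letterCount (sumWordEquiv S x).2 b = letterCount x.1 (.inr b) :=
  letterCount_of_forall_eq_comp Sum.inr_injective (fun _ => (Sum.inr_getRight _ _).symm)
    (fun i b h => mem_compl.2 fun hi => by
      simpa [h] using (isLeft_iff_mem_of_leftPositions_eq x.2 i).2 hi) b

lemma abelianEquiv_iff_sumWordEquiv {S' : Finset α'}
    (x : {x : α → β₁ ⊕ β₂ // leftPositions x = S})
    (x' : {x' : α' → β₁ ⊕ β₂ // leftPositions x' = S'}) :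
    AbelianEquiv x.1 x'.1 ↔
      AbelianEquiv (sumWordEquiv S x).1 (sumWordEquiv S' x').1 ∧
        AbelianEquiv (sumWordEquiv S x).2 (sumWordEquiv S' x').2 := by
  simp only [AbelianEquiv, letterCount_sumWordEquiv_fst, letterCount_sumWordEquiv_snd, Sum.forall]

def abelianPairsFiberEquiv (S : Finset α) (S' : Finset α') :
    {p : AbelianPairs α α' (β₁ ⊕ β₂) // leftPositions p.1.1 = S ∧ leftPositions p.1.2 = S'} ≃
      AbelianPairs S S' β₁ × AbelianPairs ↥Sᶜ ↥S'ᶜ β₂ :=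
  ({ toFun p := ⟨(⟨p.1.1.1, p.2.1⟩, ⟨p.1.1.2, p.2.2⟩), p.1.2⟩
     invFun q := ⟨⟨(q.1.1.1, q.1.2.1), q.2⟩, q.1.1.2, q.1.2.2⟩ } :
      _ ≃ {q : {x // leftPositions x = S} × {x' // leftPositions x' = S'} //
        AbelianEquiv q.1.1 q.2.1}).trans <|
    (((sumWordEquiv S).prodCongr (sumWordEquiv S')).subtypeEquiv fun q =>
      abelianEquiv_iff_sumWordEquiv q.1 q.2).trans <|
    ((Equiv.prodProdProdComm _ _ _ _).subtypeEquiv fun _ => Iff.rfl).trans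
      Equiv.subtypeProdEquivProd

lemma card_abelianPairs_sum [Fintype β₁] [Fintype β₂] :
    Fintype.card (AbelianPairs α α' (β₁ ⊕ β₂)) =
      ∑ S : Finset α, ∑ S' : Finset α',
        Fintype.card (AbelianPairs S S' β₁) * Fintype.card (AbelianPairs ↥Sᶜ ↥S'ᶜ β₂) := by
  let supports (p : AbelianPairs α α' (β₁ ⊕ β₂)) := (leftPositions p.1.1, leftPositions p.1.2)
  rw [Fintype.card_congr (Equiv.sigmaFiberEquiv supports).symm, Fintype.card_sigma,
    Fintype.sum_prod_type]
  refine Fintype.sum_congr _ _ fun S => Fintype.sum_congr _ _ fun S' => ?_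
  rw [← Fintype.card_prod]
  exact Fintype.card_congr <|
    (Equiv.subtypeEquivRight fun _ => Prod.ext_iff).trans (abelianPairsFiberEquiv S S')

end SumAlphabet

lemma sum_sum_ite_card_eq {α M : Type*} [Fintype α] [AddCommMonoid M] (f : ℕ → M) :
    ∑ S : Finset α, ∑ S' : Finset α, (if #S = #S' then f #S else 0) =
      ∑ i ∈ range (Fintype.card α + 1), (Fintype.card α).choose i ^ 2 • f i := by
  have card_filter_card_eq (S : Finset α) :
      #{S' : Finset α | #S = #S'} = (Fintype.card α).choose #S := by
    rw [← card_univ, ← card_powersetCard, powersetCard_eq_filter, powerset_univ]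
    simp only [eq_comm]
  calc _ = ∑ S : Finset α, (Fintype.card α).choose #S • f #S := by
        simp only [← sum_filter, sum_const, card_filter_card_eq]
    _ = _ := by
        rw [← powerset_univ, sum_powerset_apply_card fun i => (Fintype.card α).choose i • f i,
          card_univ]
        simp only [sq, mul_smul]

lemma card_abelianPairs_mul_card_compl {α β₁ β₂ : Type*} [Fintype α] [DecidableEq α]
    [Fintype β₁] [Fintype β₂] [DecidableEq β₁] [DecidableEq β₂] {k₁ k₂ : ℕ}
    (h₁ : Fintype.card β₁ = k₁) (h₂ : Fintype.card β₂ = k₂) (S S' : Finset α) :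
    Fintype.card (AbelianPairs S S' β₁) * Fintype.card (AbelianPairs ↥Sᶜ ↥S'ᶜ β₂) =
      if #S = #S' then abelianSquares k₁ #S * abelianSquares k₂ (Fintype.card α - #S)
      else 0 := by
  split_ifs with h
  · rw [card_abelianPairs h₁ (Fintype.card_coe S) (by rw [Fintype.card_coe, h]),
      card_abelianPairs (n := Fintype.card α - #S) h₂ (by simp) (by simp [h])]
  · rw [card_abelianPairs_eq_zero (by simpa using h), zero_mul]

theorem abelianSquares_add_general (k₁ k₂ : ℕ) (n : ℕ) :
    abelianSquares (k₁ + k₂) n =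
      ∑ i ∈ Finset.range (n + 1),
        (n.choose i) ^ 2 * abelianSquares k₁ i * abelianSquares k₂ (n - i) := by
  rw [← card_abelianPairs (β := Fin k₁ ⊕ Fin k₂) (α := Fin n) (α' := Fin n) (by simp)
    (Fintype.card_fin n) (Fintype.card_fin n), card_abelianPairs_sum]
  simp only [card_abelianPairs_mul_card_compl (Fintype.card_fin k₁) (Fintype.card_fin k₂),
    Fintype.card_fin]
  rw [sum_sum_ite_card_eq fun i => abelianSquares k₁ i * abelianSquares k₂ (n - i)]
  simp only [Fintype.card_fin, smul_eq_mul, mul_assoc]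

theorem abelianSquares_add (k₁ k₂ : ℕ) (hk₁ : 1 ≤ k₁) (hk₂ : 1 ≤ k₂) (n : ℕ) :
    abelianSquares (k₁ + k₂) n =
      ∑ i ∈ Finset.range (n + 1),
        (n.choose i) ^ 2 * abelianSquares k₁ i * abelianSquares k₂ (n - i) :=
  abelianSquares_add_general k₁ k₂ n
end

section
/- For every integer n ≥ 0, the number of abelian squares of length 2n over a 4-letter alphabet equals f_4(n) = Σ_{0≤i≤n} C(n,i)^2 · C(2i, i) · C(2n−2i, n−i). -/
open Finset

variable {ι ι' ι₂ ι₂' α β κ₁ κ₂ : Type*}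

section AbelianPairs

variable [Fintype ι] [Fintype ι']

def IsAbelianPair [DecidableEq α] (x : ι → α) (y : ι' → α) : Prop :=
  ∀ a, #{i | x i = a} = #{i | y i = a}

instance [Fintype α] [DecidableEq α] (x : ι → α) (y : ι' → α) :
    Decidable (IsAbelianPair x y) :=
  Fintype.decidableForallFintype

lemma IsAbelianPair.card_eq [Fintype α] [DecidableEq α] {x : ι → α} {y : ι' → α}
    (h : IsAbelianPair x y) : Fintype.card ι = Fintype.card ι' := by
  rw [← card_univ, card_eq_sum_card_fiberwise (f := x) (t := univ) fun _ _ => mem_univ _,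
    ← card_univ, card_eq_sum_card_fiberwise (f := y) (t := univ) fun _ _ => mem_univ _]
  exact sum_congr rfl fun a _ => h a

omit [Fintype ι'] in
lemma card_filter_arrowCongr_eq [Fintype ι₂] [DecidableEq α] [DecidableEq β] (e : ι ≃ ι₂)
    (f : α ≃ β) (x : ι → α) (b : β) : #{j | e.arrowCongr f x j = b} = #{i | x i = f.symm b} :=
  card_equiv e.symm fun j => by simp [Equiv.eq_symm_apply]

variable (ι ι' α) in
def abelianPairCount [DecidableEq ι] [DecidableEq ι'] [Fintype α] [DecidableEq α] : ℕ :=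
  Fintype.card {p : (ι → α) × (ι' → α) // IsAbelianPair p.1 p.2}

variable [DecidableEq ι] [DecidableEq ι'] [Fintype α] [DecidableEq α]

lemma abelianPairCount_eq_sum :
    abelianPairCount ι ι' α = ∑ x : ι → α, ∑ y : ι' → α, if IsAbelianPair x y then 1 else 0 := by
  rw [abelianPairCount, Fintype.card_subtype, card_filter, Fintype.sum_prod_type]

lemma abelianPairCount_of_card_ne (h : Fintype.card ι ≠ Fintype.card ι') :
    abelianPairCount ι ι' α = 0 :=
  Fintype.card_eq_zero_iff.2 ⟨fun p => h p.2.card_eq⟩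

lemma abelianPairCount_of_unique [Unique α] (h : Fintype.card ι = Fintype.card ι') :
    abelianPairCount ι ι' α = 1 := by
  refine Fintype.card_eq_one_iff.2 ⟨⟨(default, default), fun a => ?_⟩,
    fun p => Subtype.ext (Subsingleton.elim _ _)⟩
  simpa [Subsingleton.elim _ a] using h

lemma abelianPairCount_congr [Fintype ι₂] [Fintype ι₂'] [DecidableEq ι₂] [DecidableEq ι₂']
    [Fintype β] [DecidableEq β] (e : ι ≃ ι₂) (e' : ι' ≃ ι₂') (f : α ≃ β) :
    abelianPairCount ι ι' α = abelianPairCount ι₂ ι₂' β := by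
  refine Fintype.card_congr (.subtypeEquiv ((e.arrowCongr f).prodCongr (e'.arrowCongr f)) ?_)
  intro p
  simp only [IsAbelianPair, Equiv.prodCongr_apply, Prod.map_fst, Prod.map_snd,
    card_filter_arrowCongr_eq]
  exact ⟨fun h b => h _, fun h a => by simpa using h (f a)⟩

end AbelianPairs

variable (α) in
def abelianSquareCount [Fintype α] [DecidableEq α] (n : ℕ) : ℕ :=
  abelianPairCount (Fin n) (Fin n) α

lemma abelianSquares_eq_abelianSquareCount (k n : ℕ) :
    abelianSquares k n = abelianSquareCount (Fin k) n :=
  Fintype.card_congr (.refl _)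

section AbelianSquareCount

variable [Fintype α] [DecidableEq α]

lemma abelianPairCount_eq_ite [Fintype ι] [Fintype ι'] [DecidableEq ι] [DecidableEq ι'] :
    abelianPairCount ι ι' α =
      if Fintype.card ι = Fintype.card ι' then abelianSquareCount α (Fintype.card ι) else 0 := by
  split_ifs with h
  · exact abelianPairCount_congr (Fintype.equivFin ι) (Fintype.equivFinOfCardEq h.symm) (.refl α)
  · exact abelianPairCount_of_card_ne h

lemma abelianSquareCount_of_unique [Unique α] (n : ℕ) : abelianSquareCount α n = 1 :=
  abelianPairCount_of_unique rfl

lemma abelianSquareCount_congr [Fintype β] [DecidableEq β] (f : α ≃ β) (n : ℕ) :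
    abelianSquareCount α n = abelianSquareCount β n :=
  abelianPairCount_congr (.refl _) (.refl _) f

end AbelianSquareCount

section SumAlphabet

variable [Fintype ι] [DecidableEq ι]

def sumWord : (Σ S : Finset ι, (S → κ₁) × (↥Sᶜ → κ₂)) → ι → κ₁ ⊕ κ₂
  | ⟨S, f, g⟩, i => if h : i ∈ S then .inl (f ⟨i, h⟩) else .inr (g ⟨i, mem_compl.2 h⟩)

variable {S : Finset ι} (f : S → κ₁) (g : ↥Sᶜ → κ₂)

@[simp]
lemma sumWord_apply_of_mem (j : S) : sumWord ⟨S, f, g⟩ j = .inl (f j) :=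
  dif_pos j.2

@[simp]
lemma sumWord_apply_of_mem_compl (j : ↥Sᶜ) : sumWord ⟨S, f, g⟩ j = .inr (g j) :=
  dif_neg (mem_compl.1 j.2)

lemma mem_iff_isLeft_sumWord (i : ι) : i ∈ S ↔ (sumWord ⟨S, f, g⟩ i).isLeft := by
  by_cases h : i ∈ S <;> simp [sumWord, h]

variable (ι κ₁ κ₂) in
lemma sumWord_bijective : Function.Bijective (sumWord (ι := ι) (κ₁ := κ₁) (κ₂ := κ₂)) := by
  constructor
  · rintro ⟨S, f, g⟩ ⟨T, f', g'⟩ h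
    obtain rfl : S = T := by
      ext i
      rw [mem_iff_isLeft_sumWord f g, mem_iff_isLeft_sumWord f' g', h]
    have hf : f = f' := funext fun j => by simpa using congrFun h j
    have hg : g = g' := funext fun j => by simpa using congrFun h j
    rw [hf, hg]
  · intro x
    refine ⟨⟨({i | (x i).isLeft} : Finset ι), fun j => (x j).getLeft (mem_filter.1 j.2).2,
      fun j => (x j).getRight (by simpa using mem_compl.1 j.2)⟩, funext fun i => ?_⟩
    by_cases h : (x i).isLeft <;> simp [sumWord, h]

variable [DecidableEq κ₁] [DecidableEq κ₂]

lemma card_filter_sumWord_eq_inl (a : κ₁) :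
    #{i | sumWord ⟨S, f, g⟩ i = .inl a} = #{j | f j = a} := by
  refine (card_bij (fun j _ => j.1) (fun j => by simp) (fun _ _ _ _ => Subtype.ext) ?_).symm
  intro i hi
  by_cases h : i ∈ S
  · refine ⟨⟨i, h⟩, ?_, rfl⟩
    simpa using (sumWord_apply_of_mem f g ⟨i, h⟩).symm.trans (mem_filter.1 hi).2
  · simpa using (sumWord_apply_of_mem_compl f g ⟨i, mem_compl.2 h⟩).symm.trans (mem_filter.1 hi).2

lemma card_filter_sumWord_eq_inr (b : κ₂) :
    #{i | sumWord ⟨S, f, g⟩ i = .inr b} = #{j | g j = b} := by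
  refine (card_bij (fun j _ => j.1) (fun j => by simp) (fun _ _ _ _ => Subtype.ext) ?_).symm
  intro i hi
  by_cases h : i ∈ S
  · simpa using (sumWord_apply_of_mem f g ⟨i, h⟩).symm.trans (mem_filter.1 hi).2
  · refine ⟨⟨i, mem_compl.2 h⟩, ?_, rfl⟩
    simpa using (sumWord_apply_of_mem_compl f g ⟨i, mem_compl.2 h⟩).symm.trans (mem_filter.1 hi).2

end SumAlphabet

section Split

variable [Fintype ι] [DecidableEq ι] [Fintype ι'] [DecidableEq ι']

lemma sum_sumWord {M : Type*} [AddCommMonoid M] [Fintype κ₁] [Fintype κ₂]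
    (F : (ι → κ₁ ⊕ κ₂) → M) :
    ∑ x, F x = ∑ S : Finset ι, ∑ f : S → κ₁, ∑ g : ↥Sᶜ → κ₂, F (sumWord ⟨S, f, g⟩) := by
  rw [← Fintype.sum_bijective _ (sumWord_bijective ι κ₁ κ₂) _ _ fun _ => rfl, Fintype.sum_sigma]
  simp only [Fintype.sum_prod_type]

variable [DecidableEq κ₁] [DecidableEq κ₂]

lemma isAbelianPair_sumWord_iff {S : Finset ι} {T : Finset ι'} (f : S → κ₁) (g : ↥Sᶜ → κ₂)
    (f' : T → κ₁) (g' : ↥Tᶜ → κ₂) :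
    IsAbelianPair (sumWord ⟨S, f, g⟩) (sumWord ⟨T, f', g'⟩) ↔
      IsAbelianPair f f' ∧ IsAbelianPair g g' := by
  simp only [IsAbelianPair, Sum.forall, card_filter_sumWord_eq_inl, card_filter_sumWord_eq_inr]

theorem abelianPairCount_sum [Fintype κ₁] [Fintype κ₂] :
    abelianPairCount ι ι' (κ₁ ⊕ κ₂) =
      ∑ S : Finset ι, ∑ T : Finset ι', abelianPairCount S T κ₁ * abelianPairCount ↥Sᶜ ↥Tᶜ κ₂ := by
  simp only [abelianPairCount_eq_sum, sum_mul_sum, ite_zero_mul_ite_zero, mul_one]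
  rw [sum_sumWord]
  refine sum_congr rfl fun S _ => ?_
  simp only [sum_sumWord (fun y => ite (IsAbelianPair _ y) 1 0), isAbelianPair_sumWord_iff]
  exact (sum_congr rfl fun f _ => sum_comm).trans sum_comm

end Split

lemma sum_powerset_sum_powerset_ite_card_eq {M : Type*} [AddCommMonoid M] (s : Finset β)
    (g : ℕ → M) :
    ∑ S ∈ s.powerset, ∑ T ∈ s.powerset, (if #S = #T then g #S else 0) =
      ∑ i ∈ range (#s + 1), (#s).choose i ^ 2 • g i := by
  have inner (S) (hS : S ∈ s.powerset) :
      ∑ T ∈ s.powerset, (if #S = #T then g #S else 0) = (#s).choose #S • g #S := by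
    rw [sum_powerset_apply_card fun m => if #S = m then g #S else 0]
    simp only [smul_ite, smul_zero, sum_ite_eq, mem_range, Nat.lt_succ_iff,
      card_le_card (mem_powerset.1 hS), if_true]
  rw [sum_congr rfl inner, sum_powerset_apply_card fun m => (#s).choose m • g m]
  simp only [smul_smul, sq]

theorem abelianSquareCount_sum [Fintype κ₁] [Fintype κ₂] [DecidableEq κ₁] [DecidableEq κ₂]
    (n : ℕ) :
    abelianSquareCount (κ₁ ⊕ κ₂) n = ∑ i ∈ range (n + 1),
      n.choose i ^ 2 * abelianSquareCount κ₁ i * abelianSquareCount κ₂ (n - i) := by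
  have term (S T : Finset (Fin n)) :
      abelianPairCount S T κ₁ * abelianPairCount ↥Sᶜ ↥Tᶜ κ₂ =
        if #S = #T then abelianSquareCount κ₁ #S * abelianSquareCount κ₂ (n - #S) else 0 := by
    simp only [abelianPairCount_eq_ite (ι := S), abelianPairCount_eq_ite (ι := ↥Sᶜ),
      Fintype.card_coe, card_compl, Fintype.card_fin]
    split_ifs <;> simp_all
  rw [abelianSquareCount, abelianPairCount_sum]
  simp only [term]
  rw [← powerset_univ, sum_powerset_sum_powerset_ite_card_eq univ
    fun k => abelianSquareCount κ₁ k * abelianSquareCount κ₂ (n - k), card_univ, Fintype.card_fin]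
  simp only [smul_eq_mul, mul_assoc]

lemma abelianSquareCount_fin_two (n : ℕ) : abelianSquareCount (Fin 2) n = (2 * n).choose n := by
  rw [← abelianSquareCount_congr (finSumFinEquiv : Fin 1 ⊕ Fin 1 ≃ Fin 2), abelianSquareCount_sum]
  simp only [abelianSquareCount_of_unique, mul_one, Nat.sum_range_choose_sq]

theorem abelianSquares_four (n : ℕ) :
    abelianSquares 4 n =
      ∑ i ∈ Finset.range (n + 1),
        (n.choose i) ^ 2 * (2 * i).choose i * (2 * n - 2 * i).choose (n - i) := by
  rw [abelianSquares_eq_abelianSquareCount,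
    ← abelianSquareCount_congr (finSumFinEquiv : Fin 2 ⊕ Fin 2 ≃ Fin 4), abelianSquareCount_sum]
  simp only [abelianSquareCount_fin_two, Nat.mul_sub]
end

section
/- Fix integers m ≥ 1 and l with 1 ≤ l ≤ m, and real numbers x_{l+1}, …, x_m. Define, for 0 ≤ j ≤ m, S_{m,j}(x_{j+1},…,x_m) = ((j+2)/(j+1)) · Σ_{j+1≤i≤m} x_i² + (2/(j+1)) · Σ_{j+1≤i<i'≤m} x_i·x_{i'} (so that S_{m,0} = Σ_{1≤i≤m} x_i² + (Σ_{1≤i≤m} x_i)²). Then ∫_{−∞}^{∞} exp(−S_{m,l−1}(x_l, x_{l+1}, …, x_m)) dx_l = π^{1/2} · (l/(l+1))^{1/2} · exp(−S_{m,l}(x_{l+1},…,x_m)). -/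
/-
With `x_l = t` and the other coordinates fixed, `S_{m,l-1}` is a quadratic polynomial in `t` with
leading coefficient `(l+1)/l`. Completing the square, and using
`(Σ x_i)² = Σ x_i² + 2 Σ_{i<i'} x_i x_{i'}` over `l < i ≤ m`, the remaining constant term is exactly
`S_{m,l}`. The Gaussian integral `∫ exp(-a s²) ds = √(π/a)` with `a = (l+1)/l` then gives the factor
`π^{1/2} (l/(l+1))^{1/2}`.
-/

open Real MeasureTheory

/-- The quadratic form `S_{m,j}` in the variables `x_{j+1}, …, x_m`:
`S_{m,j} = ((j+2)/(j+1)) · Σ_{j+1 ≤ i ≤ m} x_i² + (2/(j+1)) · Σ_{j+1 ≤ i < i' ≤ m} x_i x_{i'}`. -/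
noncomputable def S (m j : ℕ) (x : ℕ → ℝ) : ℝ :=
  ((j + 2 : ℝ) / (j + 1)) * ∑ i ∈ Finset.Icc (j + 1) m, x i ^ 2 +
    (2 / (j + 1 : ℝ)) *
      ∑ i ∈ Finset.Icc (j + 1) m, ∑ i' ∈ Finset.Icc (i + 1) m, x i * x i'

open Finset

theorem Finset.sum_Icc_eq_add_sum_Icc_succ {M : Type*} [AddCommMonoid M] (f : ℕ → M) {a m : ℕ}
    (h : a ≤ m) : ∑ i ∈ Icc a m, f i = f a + ∑ i ∈ Icc (a + 1) m, f i := by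
  rw [← insert_Icc_add_one_left_eq_Icc h, sum_insert (by simp)]

theorem Finset.sq_sum_Icc {R : Type*} [CommRing R] (f : ℕ → R) (a m : ℕ) :
    (∑ i ∈ Icc a m, f i) ^ 2 =
      ∑ i ∈ Icc a m, f i ^ 2 + 2 * ∑ i ∈ Icc a m, ∑ i' ∈ Icc (i + 1) m, f i * f i' := by
  induction h : m + 1 - a generalizing a with
  | zero => simp [Icc_eq_empty_of_lt (by omega : m < a)]
  | succ k ih =>
    simp only [sum_Icc_eq_add_sum_Icc_succ _ (by omega : a ≤ m)]
    rw [← mul_sum]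
    linear_combination ih (a + 1) (by omega)

theorem Finset.sum_Icc_update_of_lt {α M : Type*} [AddCommMonoid M] (g : ℕ → α → M)
    (x : ℕ → α) {k a : ℕ} (t : α) (h : k < a) (m : ℕ) :
    ∑ i ∈ Icc a m, g i (Function.update x k t i) = ∑ i ∈ Icc a m, g i (x i) :=
  sum_congr rfl fun i hi => by rw [Function.update_of_ne (by grind)]

theorem S_update_succ {m j : ℕ} (hj : j < m) (x : ℕ → ℝ) (t : ℝ) :
    S m j (Function.update x (j + 1) t) =
      (j + 2) / (j + 1) * (t + (∑ i ∈ Icc (j + 2) m, x i) / (j + 2)) ^ 2 + S m (j + 1) x := by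
  have hsq := sq_sum_Icc x (j + 2) m
  have hcross : ∑ i ∈ Icc (j + 2) m, ∑ i' ∈ Icc (i + 1) m,
      Function.update x (j + 1) t i * Function.update x (j + 1) t i' =
        ∑ i ∈ Icc (j + 2) m, ∑ i' ∈ Icc (i + 1) m, x i * x i' :=
    sum_congr rfl fun i hi => by
      rw [sum_Icc_update_of_lt (fun i' y => Function.update x (j + 1) t i * y) x t (by grind),
        Function.update_of_ne (by grind)]
  unfold S
  rw [show j + 1 + 1 = j + 2 from rfl, sum_Icc_eq_add_sum_Icc_succ _ (by omega : j + 1 ≤ m),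
    sum_Icc_eq_add_sum_Icc_succ _ (by omega : j + 1 ≤ m), Function.update_self,
    sum_Icc_update_of_lt (fun _ y => y ^ 2) x t (by omega : j + 1 < j + 2),
    sum_Icc_update_of_lt (fun _ y => t * y) x t (by omega : j + 1 < j + 2), hcross, ← mul_sum]
  push_cast
  field_simp
  linear_combination (-(j + 2 : ℝ)) * hsq

theorem integral_gaussian_comp_add_right (a b : ℝ) : ∫ t : ℝ, exp (-a * (t + b) ^ 2) = √(π / a) := by
  rw [integral_add_right_eq_self (fun t => exp (-a * t ^ 2)) b, integral_gaussian]

theorem integral_exp_neg_S_general (m l : ℕ) (hl : 1 ≤ l) (hlm : l ≤ m)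
    (x : ℕ → ℝ) :
    ∫ t : ℝ, Real.exp (-S m (l - 1) (Function.update x l t)) =
      π ^ ((1 : ℝ) / 2) * ((l : ℝ) / (l + 1)) ^ ((1 : ℝ) / 2) *
        Real.exp (-S m l x) := by
  obtain ⟨j, rfl⟩ : ∃ j, l = j + 1 := ⟨l - 1, by omega⟩
  simp_rw [Nat.add_sub_cancel, S_update_succ (by omega : j < m), neg_add, exp_add, ← neg_mul,
    integral_mul_const, integral_gaussian_comp_add_right]
  have hπ : π / ((j + 2) / (j + 1)) = π * (((j + 1 : ℕ) : ℝ) / ((j + 1 : ℕ) + 1)) := by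
    push_cast; field_simp; ring
  rw [hπ, sqrt_mul pi_pos.le, sqrt_eq_rpow, sqrt_eq_rpow]

theorem integral_exp_neg_S (m l : ℕ) (hm : 1 ≤ m) (hl : 1 ≤ l) (hlm : l ≤ m)
    (x : ℕ → ℝ) :
    ∫ t : ℝ, Real.exp (-S m (l - 1) (Function.update x l t)) =
      π ^ ((1 : ℝ) / 2) * ((l : ℝ) / (l + 1)) ^ ((1 : ℝ) / 2) *
        Real.exp (-S m l x) :=
  integral_exp_neg_S_general m l hl hlm x
end
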